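/- Let K : ℝ → ℝ be a q-times continuously differentiable kernel with compact support in [−1, 1] such that K and its derivatives up to order q−1 vanish at the boundary. Let g(t) = sin(ωt) with ω > 0. Then for the scaled kernel K_η, |(K_η * g)(Δ)| ≤ C · (1/(ωη))^q for all Δ ∈ ℝ, where C depends only on K and q. -/

import Mathlib

open MeasureTheory Set

private lemma sin_cont (c lam : ℝ) : Continuous fun u : ℝ => Real.sin (c - lam * u) :=
  Real.continuous_sin.comp (continuous_const.sub (continuous_const.mul continuous_id))

private lemma cos_cont (c lam : ℝ) : Continuous fun u : ℝ => Real.cos (c - lam * u) :=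
  Real.continuous_cos.comp (continuous_const.sub (continuous_const.mul continuous_id))

private lemma ibp_bound (n : ℕ) : ∀ (f : ℝ → ℝ), ContDiff ℝ n f →
    (∀ j < n, iteratedDeriv j f 1 = 0 ∧ iteratedDeriv j f (-1) = 0) →
    ∀ (lam : ℝ), 0 < lam → ∀ (c : ℝ),
    |∫ u in (-1:ℝ)..1, f u * Real.sin (c - lam * u)|
      ≤ (1 / lam) ^ n * ∫ u in (-1:ℝ)..1, |iteratedDeriv n f u| := by
  induction n with
  | zero =>
    intro f hf _ lam hlam c
    simp only [pow_zero, one_mul, iteratedDeriv_zero]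
    calc |∫ u in (-1:ℝ)..1, f u * Real.sin (c - lam * u)|
        ≤ ∫ u in (-1:ℝ)..1, |f u * Real.sin (c - lam * u)| :=
          intervalIntegral.abs_integral_le_integral_abs (by norm_num)
      _ ≤ ∫ u in (-1:ℝ)..1, |f u| := by
          apply intervalIntegral.integral_mono_on (by norm_num)
          · exact ((hf.continuous.mul (sin_cont c lam)).abs).intervalIntegrable _ _
          · exact (hf.continuous.abs).intervalIntegrable _ _
          · intro x _
            rw [abs_mul]
            exact mul_le_of_le_one_right (abs_nonneg _) (Real.abs_sin_le_one _)
  | succ n ih =>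
    intro f hf hb lam hlam c
    have hlam' : lam ≠ 0 := ne_of_gt hlam
    have hfc : ContDiff ℝ ((n : ℕ∞) + 1) f := by exact_mod_cast hf
    obtain ⟨hd, -, hder⟩ := contDiff_succ_iff_deriv.mp hfc
    have hder : ContDiff ℝ n (deriv f) := hder
    -- integration by parts
    have hibp : ∫ u in (-1:ℝ)..1, f u * Real.sin (c - lam * u)
        = -(1/lam) * ∫ u in (-1:ℝ)..1, deriv f u * Real.cos (c - lam * u) := by
      have hv : ∀ x ∈ Set.uIcc (-1:ℝ) 1,
          HasDerivAt (fun u => (1/lam) * Real.cos (c - lam * u)) (Real.sin (c - lam * x)) x := by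
        intro x _
        have h1 : HasDerivAt (fun u : ℝ => c - lam * u) (-lam) x := by
          simpa using ((hasDerivAt_id x).const_mul lam).const_sub c
        have h2 : HasDerivAt (fun u => Real.cos (c - lam * u))
            (-Real.sin (c - lam * x) * (-lam)) x := (Real.hasDerivAt_cos _).comp x h1
        have h3 := h2.const_mul (1/lam)
        have h4 : (1/lam) * (-Real.sin (c - lam * x) * -lam) = Real.sin (c - lam * x) := by
          field_simp
        rw [h4] at h3
        exact h3
      have hu : ∀ x ∈ Set.uIcc (-1:ℝ) 1, HasDerivAt f (deriv f x) x :=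
        fun x _ => (hd x).hasDerivAt
      have hibp0 := intervalIntegral.integral_mul_deriv_eq_deriv_mul hu hv
        ((hder.continuous).intervalIntegrable _ _)
        ((sin_cont c lam).intervalIntegrable _ _)
      have hb0 := hb 0 (Nat.succ_pos n)
      simp only [iteratedDeriv_zero] at hb0
      rw [hibp0, hb0.1, hb0.2]
      simp only [zero_mul, sub_zero, zero_sub]
      rw [← intervalIntegral.integral_const_mul, ← intervalIntegral.integral_neg]
      congr 1
      ext x
      ring
    rw [hibp]
    have hcos : ∀ x : ℝ, Real.cos (c - lam * x) = Real.sin ((c + Real.pi/2) - lam * x) := by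
      intro x
      rw [show (c + Real.pi/2) - lam * x = (c - lam * x) + Real.pi/2 by ring,
        Real.sin_add_pi_div_two]
    have hb' : ∀ j < n, iteratedDeriv j (deriv f) 1 = 0 ∧ iteratedDeriv j (deriv f) (-1) = 0 := by
      intro j hj
      have := hb (j+1) (by omega)
      rwa [iteratedDeriv_succ'] at this
    have key := ih (deriv f) hder hb' lam hlam (c + Real.pi/2)
    rw [abs_mul, abs_neg, abs_of_pos (by positivity : (0:ℝ) < 1/lam)]
    simp_rw [hcos]
    calc (1/lam) * |∫ u in (-1:ℝ)..1, deriv f u * Real.sin ((c + Real.pi/2) - lam * u)|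
        ≤ (1/lam) * ((1/lam) ^ n * ∫ u in (-1:ℝ)..1, |iteratedDeriv n (deriv f) u|) :=
          mul_le_mul_of_nonneg_left key (by positivity)
      _ = (1/lam) ^ (n+1) * ∫ u in (-1:ℝ)..1, |iteratedDeriv (n+1) f u| := by
          simp_rw [← iteratedDeriv_succ']
          ring

/-- Averaging out fast oscillations: convolving the scaled kernel `K_η` with
`sin(ωt)` yields a quantity bounded by `C (1/(ωη))^q`, by `q` integrations by parts. -/
theorem stmt6 (q : ℕ) (K : ℝ → ℝ) (hK : ContDiff ℝ q K)
    (hKsupp : tsupport K ⊆ Icc (-1 : ℝ) 1)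
    (hbdry : ∀ j < q, iteratedDeriv j K 1 = 0 ∧ iteratedDeriv j K (-1) = 0)
    (ω : ℝ) (hω : 0 < ω) :
    ∃ C : ℝ, 0 < C ∧ ∀ η : ℝ, 0 < η → ∀ Δ : ℝ,
      |∫ τ : ℝ, Real.sin (ω * τ) * ((2 / η) * K (2 * (Δ - τ) / η))|
        ≤ C * (1 / (ω * η)) ^ q := by
  set B : ℝ := ∫ u in (-1:ℝ)..1, |iteratedDeriv q K u| with hB
  have hBnn : 0 ≤ B :=
    intervalIntegral.integral_nonneg (by norm_num) (fun u _ => abs_nonneg _)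
  refine ⟨2 ^ q * B + 1, by positivity, fun η hη Δ => ?_⟩
  have hη' : η ≠ 0 := ne_of_gt hη
  set lam : ℝ := ω * η / 2 with hlamdef
  have hlam : 0 < lam := by positivity
  have h2η : (2:ℝ)/η ≠ 0 := by positivity
  -- change of variables
  have hchg : (∫ τ : ℝ, Real.sin (ω * τ) * ((2 / η) * K (2 * (Δ - τ) / η)))
      = ∫ u in (-1:ℝ)..1, K u * Real.sin (ω * Δ - lam * u) := by
    set G : ℝ → ℝ := fun τ => Real.sin (ω * τ) * ((2 / η) * K (2 * (Δ - τ) / η)) with hG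
    have h1 : (∫ u : ℝ, G (Δ - (η/2) * u)) = |(η/2)⁻¹| • ∫ y : ℝ, G (Δ - y) := by
      simpa using MeasureTheory.Measure.integral_comp_mul_left (fun y => G (Δ - y)) (η/2)
    have h2 : (∫ y : ℝ, G (Δ - y)) = ∫ x : ℝ, G x := by
      simp_rw [sub_eq_add_neg]
      rw [show (fun y : ℝ => G (Δ + -y)) = (fun y : ℝ => (fun z => G (Δ + z)) (-y)) from rfl]
      rw [integral_neg_eq_self (μ := volume) (fun z => G (Δ + z))]
      exact integral_add_left_eq_self (μ := volume) G Δ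
    have h3 : ∀ u : ℝ, G (Δ - (η/2) * u) = Real.sin (ω * Δ - lam * u) * ((2/η) * K u) := by
      intro u
      have harg : 2 * (Δ - (Δ - η / 2 * u)) / η = u := by field_simp; ring
      have hsin : ω * (Δ - η/2 * u) = ω * Δ - lam * u := by rw [hlamdef]; ring
      simp only [hG]
      rw [harg, hsin]
    have h4 : (∫ u : ℝ, G (Δ - (η/2) * u))
        = (2/η) * ∫ u : ℝ, Real.sin (ω * Δ - lam * u) * K u := by
      simp_rw [h3]
      rw [← MeasureTheory.integral_const_mul]
      congr 1
      ext u
      ring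
    have habs : |(η/2)⁻¹| = 2/η := by
      rw [abs_of_pos (by positivity)]
      rw [one_div (η/2) |>.symm]
      field_simp
    have hc : (2/η) * (∫ u : ℝ, Real.sin (ω * Δ - lam * u) * K u) = (2/η) * ∫ x : ℝ, G x := by
      rw [← h4, h1, h2, habs, smul_eq_mul]
    have h5 : (∫ x : ℝ, G x) = ∫ u : ℝ, Real.sin (ω * Δ - lam * u) * K u :=
      (mul_left_cancel₀ h2η hc).symm
    have hsupp : ∀ u : ℝ, u ∉ Icc (-1:ℝ) 1 → Real.sin (ω * Δ - lam * u) * K u = 0 := by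
      intro u hu
      have : K u = 0 := image_eq_zero_of_notMem_tsupport (fun h => hu (hKsupp h))
      simp [this]
    have h6 : (∫ u : ℝ, Real.sin (ω * Δ - lam * u) * K u)
        = ∫ u in (-1:ℝ)..1, Real.sin (ω * Δ - lam * u) * K u := by
      rw [← setIntegral_eq_integral_of_forall_compl_eq_zero hsupp,
        intervalIntegral.integral_of_le (by norm_num : (-1:ℝ) ≤ 1),
        MeasureTheory.integral_Icc_eq_integral_Ioc]
    rw [h5, h6]
    apply intervalIntegral.integral_congr
    intro u _
    ring
  rw [hchg]
  have key := ibp_bound q K hK hbdry lam hlam (ω * Δ)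
  calc |∫ u in (-1:ℝ)..1, K u * Real.sin (ω * Δ - lam * u)| ≤ (1/lam)^q * B := key
    _ = (2^q * B) * (1/(ω*η))^q := by
        rw [hlamdef]
        rw [show (1 : ℝ) / (ω * η / 2) = 2 * (1/(ω*η)) by field_simp]
        rw [mul_pow]
        ring
    _ ≤ (2^q * B + 1) * (1/(ω*η))^q :=
        mul_le_mul_of_nonneg_right (by linarith) (by positivity)
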